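/- (Main theorem, case α < 1.) Consider an HL-flock with random interactions satisfying Condition (K) with p ∈ (0,1] and 0 < α < 1. Then almost surely the flock flocks: ‖v[t]‖∞ → 0 and x[t] converges to a (random) limit in ℝ^{3k} as t → ∞. -/

import Mathlib

open MeasureTheory Finset Filter

namespace FlockAux

/-- convexity: `exp (-x) ≤ 1 - (1 - exp (-1)) * x` on `[0,1]`. -/
lemma exp_neg_le_one_sub {x : ℝ} (h0 : 0 ≤ x) (h1 : x ≤ 1) :
    Real.exp (-x) ≤ 1 - (1 - Real.exp (-1)) * x := by
  have hc := convexOn_exp.2 (Set.mem_univ (0:ℝ)) (Set.mem_univ (-1:ℝ))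
    (by linarith : (0:ℝ) ≤ 1 - x) h0 (by ring)
  simp only [smul_eq_mul, mul_zero, mul_neg_one, zero_add, Real.exp_zero, mul_one] at hc
  calc Real.exp (-x) ≤ (1 - x) + x * Real.exp (-1) := hc
    _ = 1 - (1 - Real.exp (-1)) * x := by ring

/-- `log y ≤ y ^ c / c` for `y ≥ 1`, `c > 0`. -/
lemma log_le_rpow_div {y c : ℝ} (hy : 1 ≤ y) (hc : 0 < c) :
    Real.log y ≤ y ^ c / c := by
  have hy0 : 0 < y := lt_of_lt_of_le one_pos hy
  have h1 : Real.log (y ^ c) ≤ y ^ c - 1 :=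
    Real.log_le_sub_one_of_pos (Real.rpow_pos_of_pos hy0 _)
  rw [Real.log_rpow hy0] at h1
  have : c * Real.log y ≤ y ^ c := by nlinarith [Real.rpow_pos_of_pos hy0 c]
  rw [div_eq_inv_mul, ← mul_le_mul_iff_right₀ hc, ← mul_assoc, mul_inv_cancel₀ hc.ne', one_mul]
  exact this

/-- linear-in-log dominated by a small power: `M * log y ≤ δ * y ^ c + C`. -/
lemma log_lin_le {M δ c : ℝ} (hM : 0 ≤ M) (hδ : 0 < δ) (hc : 0 < c) :
    ∃ C : ℝ, 0 ≤ C ∧ ∀ y : ℝ, 1 ≤ y → M * Real.log y ≤ δ * y ^ c + C := by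
  set K : ℝ := M * 2 / c with hK
  have hK0 : 0 ≤ K := by positivity
  refine ⟨K ^ 2 / (4 * δ), by positivity, fun y hy => ?_⟩
  have hy0 : 0 < y := lt_of_lt_of_le one_pos hy
  have h1 : Real.log y ≤ y ^ (c / 2) / (c / 2) := log_le_rpow_div hy (by positivity)
  set z : ℝ := y ^ (c / 2) with hz
  have hz0 : 0 < z := Real.rpow_pos_of_pos hy0 _
  have hzz : z * z = y ^ c := by
    rw [hz, ← Real.rpow_add hy0]; ring_nf
  have h2 : M * Real.log y ≤ K * z := by
    calc M * Real.log y ≤ M * (z / (c / 2)) := by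
          exact mul_le_mul_of_nonneg_left h1 hM
      _ = K * z := by rw [hK]; field_simp
  have h3 : K * z - δ * (z * z) ≤ K ^ 2 / (4 * δ) := by
    rw [le_div_iff₀ (by positivity)]
    nlinarith [sq_nonneg (2 * δ * z - K)]
  calc M * Real.log y ≤ K * z := h2
    _ ≤ δ * (z * z) + K ^ 2 / (4 * δ) := by linarith
    _ = δ * y ^ c + K ^ 2 / (4 * δ) := by rw [hzz]

/-- telescoping lower bound for `∑ (r+1)^(-α)`. -/
lemma sum_rpow_inv_ge {α : ℝ} (hα0 : 0 < α) (hα1 : α < 1) (s t : ℕ) (hst : s ≤ t) :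
    ((t : ℝ) + 1) ^ (1 - α) - ((s : ℝ) + 1) ^ (1 - α) ≤
      (1 - α) * ∑ r ∈ Finset.Ico s t, ((r : ℝ) + 1) ^ (-α) := by
  induction t, hst using Nat.le_induction with
  | base => simp
  | succ t hst ih =>
      rw [Finset.sum_Ico_succ_top hst, mul_add]
      have key : ((t : ℝ) + 1 + 1) ^ (1 - α) ≤
          ((t : ℝ) + 1) ^ (1 - α) + (1 - α) * ((t : ℝ) + 1) ^ (-α) := by
        set y : ℝ := (t : ℝ) + 1 with hy
        have hy1 : (1:ℝ) ≤ y := by rw [hy]; have : (0:ℝ) ≤ (t:ℝ) := Nat.cast_nonneg t; linarith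
        have hy0 : (0:ℝ) < y := lt_of_lt_of_le one_pos hy1
        have hb : (1 + 1/y) ^ (1 - α) ≤ 1 + (1 - α) * (1/y) :=
          rpow_one_add_le_one_add_mul_self
            (by have := one_div_pos.mpr hy0; linarith) (by linarith) (by linarith)
        have hsplit : (y + 1) ^ (1 - α) = y ^ (1 - α) * (1 + 1/y) ^ (1 - α) := by
          rw [← Real.mul_rpow (le_of_lt hy0) (by positivity)]
          congr 1; field_simp
        have hpow : y ^ (1 - α) = y ^ (-α) * y := by
          rw [← Real.rpow_add_one hy0.ne' (-α)]; ring_nf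
        have h2 : y ^ (1 - α) * (1 + (1 - α) * (1/y)) =
            y ^ (1 - α) + (1 - α) * y ^ (-α) := by
          rw [hpow]; field_simp
        calc (y + 1) ^ (1 - α) = y ^ (1 - α) * (1 + 1/y) ^ (1 - α) := hsplit
          _ ≤ y ^ (1 - α) * (1 + (1 - α) * (1/y)) := by
              apply mul_le_mul_of_nonneg_left hb (le_of_lt (Real.rpow_pos_of_pos hy0 _))
          _ = y ^ (1 - α) + (1 - α) * y ^ (-α) := h2
      push_cast
      push_cast at ih key
      linarith

/-- `∏ (1 - g r) ≤ exp (-∑ g r)` when each `1 - g r ≥ 0`. -/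
lemma prod_one_sub_le_exp (s : Finset ℕ) (g : ℕ → ℝ) (hg : ∀ r ∈ s, g r ≤ 1) :
    ∏ r ∈ s, (1 - g r) ≤ Real.exp (-∑ r ∈ s, g r) := by
  have : -∑ r ∈ s, g r = ∑ r ∈ s, -(g r) := by rw [Finset.sum_neg_distrib]
  rw [this, Real.exp_sum]
  apply Finset.prod_le_prod
  · intro r hr; linarith [hg r hr]
  · intro r hr
    have := Real.add_one_le_exp (-(g r))
    linarith

/-- discrete Gronwall-type bound: if `u (t+1) ≤ (1 - c t) * u t + c t * m t` with
`c t ∈ [0,1]`, `m` antitone nonneg, then `u t ≤ (∏_{[s,t)} (1 - c r)) * u s + m s`. -/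
lemma seq_bound (u m c : ℕ → ℝ) (hm : ∀ r r', r ≤ r' → m r' ≤ m r) (hm0 : ∀ r, 0 ≤ m r)
    (hc0 : ∀ r, 0 ≤ c r) (hc1 : ∀ r, c r ≤ 1)
    (hrec : ∀ r, u (r + 1) ≤ (1 - c r) * u r + c r * m r) :
    ∀ s t, s ≤ t → u t ≤ (∏ r ∈ Finset.Ico s t, (1 - c r)) * u s + m s := by
  intro s t hst
  induction t, hst using Nat.le_induction with
  | base => simp; linarith [hm0 s]
  | succ t hst ih =>
      rw [Finset.prod_Ico_succ_top hst]
      have h1 : u (t + 1) ≤ (1 - c t) * u t + c t * m t := hrec t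
      have h2 : (0:ℝ) ≤ 1 - c t := by linarith [hc1 t]
      have h3 : m t ≤ m s := hm s t hst
      have h4 : u t ≤ (∏ r ∈ Finset.Ico s t, (1 - c r)) * u s + m s := ih
      calc u (t+1) ≤ (1 - c t) * u t + c t * m t := h1
        _ ≤ (1 - c t) * ((∏ r ∈ Finset.Ico s t, (1 - c r)) * u s + m s) + c t * m s := by
            have := mul_le_mul_of_nonneg_left h4 h2
            have := mul_le_mul_of_nonneg_left h3 (hc0 t)
            linarith
        _ = (∏ r ∈ Finset.Ico s t, (1 - c r)) * (1 - c t) * u s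
              + ((1 - c t) + c t) * m s := by ring
        _ = (∏ r ∈ Finset.Ico s t, (1 - c r)) * (1 - c t) * u s + m s := by
            rw [sub_add_cancel, one_mul]

set_option maxHeartbeats 1000000 in
lemma det_decay {k : ℕ} (V : ℕ → Fin k → EuclideanSpace ℝ (Fin 3))
    (L : Fin k → Finset (Fin k)) (A : ℕ → Fin k → Fin k → ℝ) (h : ℝ)
    (hh0 : 0 < h)
    (hLlt : ∀ i : Fin k, ∀ j ∈ L i, j < i)
    (hLne : ∀ i : Fin k, 0 < i.val → (L i).Nonempty)
    (hA0 : ∀ t, ∀ i : Fin k, ∀ j ∈ L i, 0 ≤ A t i j)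
    (hdyn : ∀ t (i : Fin k), V (t+1) i = V t i + h • ∑ j ∈ L i, A (t+1) i j • (V t j - V t i))
    (hc1 : ∀ t (i : Fin k), h * ∑ j ∈ L i, A (t+1) i j ≤ 1)
    (hV00 : ∀ i : Fin k, i.val = 0 → V 0 i = 0)
    (M0 : ℝ) (hM0 : ∀ t i, ‖V t i‖ ≤ M0)
    (α γ : ℝ) (hα0 : 0 < α) (hα1 : α < 1) (hγ : 0 < γ)
    (C : ℝ) (hC : 0 ≤ C)
    (hWB : ∀ i : Fin k, ∀ j ∈ L i, ∀ s t : ℕ, s ≤ t →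
      γ * (((t:ℝ)+1)^(1-α) - ((s:ℝ)+1)^(1-α)) ≤
        (∑ r ∈ Finset.Ico s t, A (r+1) i j) + 4 * Real.log ((t:ℝ)+1) + C) :
    ∀ i : Fin k, ∃ B β : ℝ, 0 ≤ B ∧ 0 < β ∧
      ∀ t : ℕ, ‖V t i‖ ≤ B * Real.exp (-β * ((t:ℝ)+1)^(1-α)) := by
  have h1α : 0 < 1 - α := by linarith
  set φ : ℕ → ℝ := fun t => ((t:ℝ)+1)^(1-α) with hφdef
  have hφeq : ∀ t : ℕ, ((t:ℝ)+1)^(1-α) = φ t := fun t => rfl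
  have hφ1 : ∀ t : ℕ, 1 ≤ φ t := by
    intro t
    have ht0 : (0:ℝ) ≤ (t:ℝ) := Nat.cast_nonneg t
    exact Real.one_le_rpow (by linarith) h1α.le
  have hφpos : ∀ t, 0 < φ t := fun t => lt_of_lt_of_le one_pos (hφ1 t)
  have hφmono : ∀ s t : ℕ, s ≤ t → φ s ≤ φ t := by
    intro s t hst
    apply Real.rpow_le_rpow (by positivity) _ h1α.le
    have : (s:ℝ) ≤ (t:ℝ) := Nat.cast_le.2 hst
    linarith
  suffices H : ∀ n, ∀ i : Fin k, i.val < n → ∃ B β : ℝ, 0 ≤ B ∧ 0 < β ∧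
      ∀ t : ℕ, ‖V t i‖ ≤ B * Real.exp (-β * φ t) by
    intro i; exact H k i i.isLt
  intro n
  induction n with
  | zero => intro i hi; omega
  | succ n IH =>
    intro i hi
    by_cases hin : i.val < n
    · exact IH i hin
    by_cases hi0 : i.val = 0
    · -- bottom bird: velocity identically zero
      have hLe : L i = ∅ := by
        rw [Finset.eq_empty_iff_forall_notMem]
        intro j hj
        have := hLlt i j hj
        omega
      have hzero : ∀ t, V t i = 0 := by
        intro t
        induction t with
        | zero => exact hV00 i hi0
        | succ t iht => rw [hdyn, iht, hLe]; simp
      exact ⟨0, 1, le_refl 0, one_pos, fun t => by rw [hzero t]; simp [Real.exp_nonneg]⟩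
    · have hipos : 0 < i.val := Nat.pos_of_ne_zero hi0
      have hne := hLne i hipos
      -- leaders' decay (from IH) with uniform constants
      have hlead : ∀ j : Fin k, ∃ Bβ : ℝ × ℝ, 0 ≤ Bβ.1 ∧ 0 < Bβ.2 ∧
          (j ∈ L i → ∀ t, ‖V t j‖ ≤ Bβ.1 * Real.exp (-Bβ.2 * φ t)) := by
        intro j
        by_cases hj : j ∈ L i
        · have hjn : j.val < n := by have := hLlt i j hj; omega
          obtain ⟨B, β, h1, h2, h3⟩ := IH j hjn
          exact ⟨(B, β), h1, h2, fun _ => h3⟩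
        · exact ⟨(0, 1), le_refl 0, one_pos, fun hj' => absurd hj' hj⟩
      choose g hg1 hg2 hg3 using hlead
      set B1 : ℝ := ∑ j ∈ L i, (g j).1 with hB1def
      set β1 : ℝ := (L i).inf' hne (fun j => (g j).2) with hβ1def
      have hβ1pos : 0 < β1 := by
        rw [hβ1def, Finset.lt_inf'_iff]
        exact fun j _ => hg2 j
      have hβ1le : ∀ j ∈ L i, β1 ≤ (g j).2 := fun j hj => Finset.inf'_le _ hj
      have hB1nn : 0 ≤ B1 := Finset.sum_nonneg fun j _ => hg1 j
      have hB1ge : ∀ j ∈ L i, (g j).1 ≤ B1 :=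
        fun j hj => Finset.single_le_sum (fun j _ => hg1 j) hj
      have hm : ∀ j ∈ L i, ∀ t, ‖V t j‖ ≤ B1 * Real.exp (-β1 * φ t) := by
        intro j hj t
        refine le_trans (hg3 j hj t) ?_
        apply mul_le_mul (hB1ge j hj) _ (Real.exp_nonneg _) hB1nn
        apply Real.exp_le_exp.2
        have h1 := hβ1le j hj
        have h2 := mul_le_mul_of_nonneg_right h1 (hφpos t).le
        linarith
      -- recursion
      set c : ℕ → ℝ := fun r => h * ∑ j ∈ L i, A (r+1) i j with hcdef
      set m : ℕ → ℝ := fun r => B1 * Real.exp (-β1 * φ r) with hmdef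
      have hc0 : ∀ r, 0 ≤ c r := by
        intro r
        exact mul_nonneg hh0.le (Finset.sum_nonneg fun j hj => hA0 (r+1) i j hj)
      have hc1' : ∀ r, c r ≤ 1 := fun r => hc1 r i
      have hm0 : ∀ r, 0 ≤ m r := fun r => mul_nonneg hB1nn (Real.exp_nonneg _)
      have hmanti : ∀ r r' : ℕ, r ≤ r' → m r' ≤ m r := by
        intro r r' hrr
        apply mul_le_mul_of_nonneg_left _ hB1nn
        apply Real.exp_le_exp.2
        have h1 := mul_le_mul_of_nonneg_left (hφmono r r' hrr) hβ1pos.le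
        linarith
      have hrec : ∀ r, ‖V (r+1) i‖ ≤ (1 - c r) * ‖V r i‖ + c r * m r := by
        intro r
        have hsplit : V (r+1) i = (1 - c r) • V r i
            + h • ∑ j ∈ L i, A (r+1) i j • V r j := by
          rw [hdyn r i]
          have heq : ∑ j ∈ L i, A (r+1) i j • (V r j - V r i)
              = (∑ j ∈ L i, A (r+1) i j • V r j)
                - (∑ j ∈ L i, A (r+1) i j) • V r i := by
            rw [Finset.sum_smul, ← Finset.sum_sub_distrib]
            exact Finset.sum_congr rfl fun j _ => smul_sub _ _ _
          rw [heq, smul_sub, sub_smul, one_smul, smul_smul, hcdef]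
          abel
        rw [hsplit]
        refine le_trans (norm_add_le _ _) ?_
        have h2 : ‖(1 - c r) • V r i‖ ≤ (1 - c r) * ‖V r i‖ := by
          rw [norm_smul, Real.norm_eq_abs, abs_of_nonneg (by linarith [hc1' r])]
        have h3 : ‖h • ∑ j ∈ L i, A (r+1) i j • V r j‖ ≤ c r * m r := by
          rw [norm_smul, Real.norm_eq_abs, abs_of_nonneg hh0.le]
          have h4 : ‖∑ j ∈ L i, A (r+1) i j • V r j‖
              ≤ ∑ j ∈ L i, A (r+1) i j * m r := by
            refine le_trans (norm_sum_le _ _) (Finset.sum_le_sum fun j hj => ?_)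
            rw [norm_smul, Real.norm_eq_abs, abs_of_nonneg (hA0 (r+1) i j hj)]
            exact mul_le_mul_of_nonneg_left (hm j hj r) (hA0 (r+1) i j hj)
          rw [← Finset.sum_mul] at h4
          calc h * ‖∑ j ∈ L i, A (r+1) i j • V r j‖
              ≤ h * ((∑ j ∈ L i, A (r+1) i j) * m r) :=
                mul_le_mul_of_nonneg_left h4 hh0.le
            _ = c r * m r := by rw [hcdef]; ring
        linarith
      have hseq := seq_bound (fun t => ‖V t i‖) m c hmanti hm0 hc0 hc1' hrec
      -- product bound via window bound
      obtain ⟨j0, hj0⟩ := hne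
      have hprod : ∀ s t : ℕ, s ≤ t → (∏ r ∈ Finset.Ico s t, (1 - c r)) ≤
          Real.exp (h*C + 4*h*Real.log ((t:ℝ)+1) - h*γ*(φ t - φ s)) := by
        intro s t hst
        refine le_trans (prod_one_sub_le_exp _ c fun r _ => hc1' r) ?_
        apply Real.exp_le_exp.2
        have hsum : h * ∑ r ∈ Finset.Ico s t, A (r+1) i j0 ≤ ∑ r ∈ Finset.Ico s t, c r := by
          rw [Finset.mul_sum]
          refine Finset.sum_le_sum fun r _ => ?_
          have h5 : A (r+1) i j0 ≤ ∑ j ∈ L i, A (r+1) i j :=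
            Finset.single_le_sum (fun j hj => hA0 (r+1) i j hj) hj0
          exact mul_le_mul_of_nonneg_left h5 hh0.le
        have hWBa := mul_le_mul_of_nonneg_left (hWB i j0 hj0 s t hst) hh0.le
        rw [hφeq t, hφeq s] at hWBa
        have hexp : h * (γ * (φ t - φ s)) = h*γ*(φ t - φ s) := by ring
        have hexp2 : h * ((∑ r ∈ Finset.Ico s t, A (r+1) i j0) + 4 * Real.log ((t:ℝ)+1) + C)
            = h * ∑ r ∈ Finset.Ico s t, A (r+1) i j0 + 4*h*Real.log ((t:ℝ)+1) + h*C := by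
          ring
        rw [hexp, hexp2] at hWBa
        linarith
      -- constants
      have hρ0 : (0:ℝ) < (3/4 : ℝ)^(1-α) := Real.rpow_pos_of_pos (by norm_num) _
      have hρ1 : (3/4 : ℝ)^(1-α) < 1 :=
        Real.rpow_lt_one (by norm_num) (by norm_num) h1α
      set ρ : ℝ := (3/4 : ℝ)^(1-α) with hρdef
      have h1ρ : 0 < 1 - ρ := by linarith
      set δ : ℝ := h*γ*(1-ρ)/2 with hδdef
      have hδpos : 0 < δ := by rw [hδdef]; positivity
      obtain ⟨C2, hC2nn, hlog⟩ := log_lin_le (M := 4*h) (δ := δ) (c := 1-α)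
        (by positivity) hδpos h1α
      have hM0i : 0 ≤ M0 := le_trans (norm_nonneg _) (hM0 0 i)
      set β : ℝ := min δ (β1/2) with hβdef
      have hβpos : 0 < β := lt_min hδpos (by positivity)
      set B2 : ℝ := M0 * Real.exp (h*C + C2) + B1 with hB2def
      have hB2nn : 0 ≤ B2 := by rw [hB2def]; positivity
      refine ⟨B2 + M0 * Real.exp β, β, by positivity, hβpos, ?_⟩
      intro t
      rcases Nat.eq_zero_or_pos t with rfl | ht1
      · -- t = 0
        have hφ0 : φ 0 = 1 := by
          rw [← hφeq 0]; norm_num [Real.one_rpow]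
        rw [hφ0]
        calc ‖V 0 i‖ ≤ M0 := hM0 0 i
          _ = M0 * Real.exp β * Real.exp (-β*1) := by
              have hb : β + -β*1 = 0 := by ring
              rw [mul_assoc, ← Real.exp_add, hb, Real.exp_zero, mul_one]
          _ ≤ (B2 + M0 * Real.exp β) * Real.exp (-β*1) := by
              have h9 : (0:ℝ) ≤ Real.exp (-β*1) := Real.exp_nonneg _
              have h10 := mul_nonneg hB2nn h9
              nlinarith
      · -- t ≥ 1
        set s : ℕ := t / 2 with hsdef
        have hst : s ≤ t := Nat.div_le_self t 2
        have hmain := hseq s t hst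
        -- φ s ≤ ρ * φ t
        have hφsρ : φ s ≤ ρ * φ t := by
          have hcast : ((s:ℝ)+1) ≤ (3/4) * ((t:ℝ)+1) := by
            have h6 : (s:ℝ) ≤ (t:ℝ)/2 := by
              rw [le_div_iff₀ (by norm_num : (0:ℝ) < 2)]
              have h7 := Nat.div_mul_le_self t 2
              calc (s:ℝ) * 2 = ((s * 2 : ℕ) : ℝ) := by push_cast; ring
                _ ≤ (t:ℝ) := Nat.cast_le.2 (by rw [hsdef] at *; omega)
            have h7 : (1:ℝ) ≤ (t:ℝ) := by exact_mod_cast ht1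
            linarith
          calc φ s = ((s:ℝ)+1)^(1-α) := (hφeq s).symm
            _ ≤ ((3/4) * ((t:ℝ)+1))^(1-α) :=
                Real.rpow_le_rpow (by positivity) hcast h1α.le
            _ = ρ * φ t := by
                rw [hρdef, ← hφeq t, ← Real.mul_rpow (by norm_num) (by positivity)]
        -- φ t ≤ 2 * φ s
        have hφt2 : φ t ≤ 2 * φ s := by
          have hcast : ((t:ℝ)+1) ≤ 2 * ((s:ℝ)+1) := by
            have h6 : t ≤ 2 * s + 1 := by rw [hsdef]; omega
            have h7 := (Nat.cast_le (α := ℝ)).2 h6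
            push_cast at h7
            linarith
          calc φ t = ((t:ℝ)+1)^(1-α) := (hφeq t).symm
            _ ≤ (2 * ((s:ℝ)+1))^(1-α) :=
                Real.rpow_le_rpow (by positivity) hcast h1α.le
            _ = 2^(1-α) * ((s:ℝ)+1)^(1-α) :=
                Real.mul_rpow (by norm_num) (by positivity)
            _ ≤ 2 * φ s := by
                rw [hφeq s]
                have h8 : (2:ℝ)^(1-α) ≤ 2^(1:ℝ) :=
                  Real.rpow_le_rpow_of_exponent_le (by norm_num) (by linarith)
                rw [Real.rpow_one] at h8
                exact mul_le_mul_of_nonneg_right h8 (hφpos s).le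
        -- first term
        have hterm1 : (∏ r ∈ Finset.Ico s t, (1 - c r)) * ‖V s i‖
            ≤ M0 * Real.exp (h*C + C2) * Real.exp (-β * φ t) := by
          have hp1 := hprod s t hst
          have hp2 : Real.exp (h*C + 4*h*Real.log ((t:ℝ)+1) - h*γ*(φ t - φ s))
              ≤ Real.exp (h*C + C2) * Real.exp (-β * φ t) := by
            rw [← Real.exp_add]
            apply Real.exp_le_exp.2
            have ht0 : (0:ℝ) ≤ (t:ℝ) := Nat.cast_nonneg t
            have hlog' := hlog ((t:ℝ)+1) (by linarith)
            rw [hφeq t] at hlog'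
            have hmul := mul_le_mul_of_nonneg_left hφsρ
              (by positivity : (0:ℝ) ≤ h*γ)
            have hkey : h*γ*(1-ρ)*φ t ≤ h*γ*(φ t - φ s) := by linarith [hmul]
            have h2δ : h*γ*(1-ρ)*φ t = 2*δ*φ t := by rw [hδdef]; ring
            have hβδ : β ≤ δ := min_le_left _ _
            have hβφ : β * φ t ≤ δ * φ t :=
              mul_le_mul_of_nonneg_right hβδ (hφpos t).le
            linarith
          have hprodnn : (0:ℝ) ≤ ∏ r ∈ Finset.Ico s t, (1 - c r) :=
            Finset.prod_nonneg fun r _ => by linarith [hc1' r]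
          calc (∏ r ∈ Finset.Ico s t, (1 - c r)) * ‖V s i‖
              ≤ (∏ r ∈ Finset.Ico s t, (1 - c r)) * M0 :=
                mul_le_mul_of_nonneg_left (hM0 s i) hprodnn
            _ ≤ (Real.exp (h*C + C2) * Real.exp (-β * φ t)) * M0 :=
                mul_le_mul_of_nonneg_right (le_trans hp1 hp2) hM0i
            _ = M0 * Real.exp (h*C + C2) * Real.exp (-β * φ t) := by ring
        have hterm2 : m s ≤ B1 * Real.exp (-β * φ t) := by
          rw [hmdef]
          apply mul_le_mul_of_nonneg_left _ hB1nn
          apply Real.exp_le_exp.2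
          have hβle : β ≤ β1/2 := min_le_right _ _
          have h9 : β * φ t ≤ (β1/2) * (2 * φ s) :=
            mul_le_mul hβle hφt2 (hφpos t).le (by positivity)
          linarith
        calc ‖V t i‖ ≤ (∏ r ∈ Finset.Ico s t, (1 - c r)) * ‖V s i‖ + m s := hmain
          _ ≤ M0 * Real.exp (h*C + C2) * Real.exp (-β * φ t)
              + B1 * Real.exp (-β * φ t) := add_le_add hterm1 hterm2
          _ = B2 * Real.exp (-β * φ t) := by rw [hB2def]; ring
          _ ≤ (B2 + M0 * Real.exp β) * Real.exp (-β * φ t) := by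
              apply mul_le_mul_of_nonneg_right _ (Real.exp_nonneg _)
              have := mul_nonneg hM0i (Real.exp_nonneg β)
              linarith


set_option maxHeartbeats 1000000 in
lemma exp_int_bound {Ω : Type*} [m0 : MeasurableSpace Ω] (μ : Measure Ω)
    [IsProbabilityMeasure μ]
    (F : ℕ → MeasurableSpace Ω) (hFle : ∀ t, F t ≤ m0) (hFmono : Monotone F)
    (b : ℕ → Ω → ℝ) (hb0 : ∀ r ω, 0 ≤ b r ω) (hb1 : ∀ r ω, b r ω ≤ 1)
    (hbmeas : ∀ r, Measurable[F r] (b r))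
    (d : ℕ → ℝ) (hd0 : ∀ r, 0 ≤ d r) (hd1 : ∀ r, d r ≤ 1)
    (hKb : ∀ t : ℕ, ∀ᵐ ω ∂μ, d t ≤ (μ[b (t+1) | F t]) ω) :
    ∀ s t : ℕ, s ≤ t →
      ∫ ω, Real.exp (-∑ r ∈ Finset.Ico s t, b (r+1) ω) ∂μ ≤
        ∏ r ∈ Finset.Ico s t, (1 - (1 - Real.exp (-1)) * d r) := by
  have hIbd : ∀ (f : Ω → ℝ) (c : ℝ), Measurable f → (∀ ω, ‖f ω‖ ≤ c) →
      Integrable f μ := fun f c hf hc =>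
    ⟨hf.aestronglyMeasurable, HasFiniteIntegral.of_bounded (ae_of_all μ hc)⟩
  set κ : ℝ := 1 - Real.exp (-1) with hκdef
  have hκ0 : 0 < κ := by
    have : Real.exp (-1) < 1 := Real.exp_lt_one_iff.2 (by norm_num)
    rw [hκdef]; linarith
  have hκ1 : κ < 1 := by
    have := Real.exp_pos (-1)
    rw [hκdef]; linarith
  intro s t hst
  induction t, hst using Nat.le_induction with
  | base => simp
  | succ t hst ih =>
    set Y : Ω → ℝ := fun ω => Real.exp (-∑ r ∈ Finset.Ico s t, b (r+1) ω) with hYdef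
    have hYmF : Measurable[F t] Y := by
      apply Measurable.comp Real.measurable_exp (Measurable.neg ?_)
      apply Finset.measurable_sum
      intro r hr
      have hrt : r + 1 ≤ t := by rw [Finset.mem_Ico] at hr; omega
      exact (hbmeas (r+1)).mono (hFmono hrt) le_rfl
    have hYm : Measurable Y := hYmF.mono (hFle t) le_rfl
    have hY0 : ∀ ω, 0 ≤ Y ω := fun ω => (Real.exp_pos _).le
    have hY1 : ∀ ω, Y ω ≤ 1 := by
      intro ω
      rw [hYdef, show (1:ℝ) = Real.exp 0 from (Real.exp_zero).symm]
      apply Real.exp_le_exp.2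
      have : 0 ≤ ∑ r ∈ Finset.Ico s t, b (r+1) ω :=
        Finset.sum_nonneg fun r _ => hb0 _ ω
      simpa using this
    have hbm : Measurable (b (t+1)) := (hbmeas (t+1)).mono (hFle (t+1)) le_rfl
    have hYint : Integrable Y μ := hIbd Y 1 hYm fun ω => by
      rw [Real.norm_eq_abs, abs_of_nonneg (hY0 ω)]; exact hY1 ω
    have hbint : Integrable (b (t+1)) μ := hIbd _ 1 hbm fun ω => by
      rw [Real.norm_eq_abs, abs_of_nonneg (hb0 _ ω)]; exact hb1 _ ω
    have hYbint : Integrable (Y * b (t+1)) μ := by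
      refine hIbd _ 1 (hYm.mul hbm) fun ω => ?_
      rw [Pi.mul_apply, Real.norm_eq_abs,
        abs_of_nonneg (mul_nonneg (hY0 ω) (hb0 _ ω))]
      nlinarith [hY0 ω, hY1 ω, hb0 (t+1) ω, hb1 (t+1) ω]
    have hcond : μ[Y * b (t+1) | F t] =ᵐ[μ] Y * μ[b (t+1) | F t] :=
      condExp_mul_of_stronglyMeasurable_left hYmF.stronglyMeasurable hYbint hbint
    have hceint : Integrable (μ[b (t+1) | F t]) μ := integrable_condExp
    have hYceint : Integrable (Y * μ[b (t+1) | F t]) μ := by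
      have := hceint.bdd_mul hYm.aestronglyMeasurable
        (c := 1) (ae_of_all μ fun ω => by rw [Real.norm_eq_abs, abs_of_nonneg (hY0 ω)]; exact hY1 ω)
      exact this
    have hkey : d t * ∫ ω, Y ω ∂μ ≤ ∫ ω, Y ω * b (t+1) ω ∂μ := by
      have h1 : ∫ ω, (Y * b (t+1)) ω ∂μ = ∫ ω, (μ[Y * b (t+1) | F t]) ω ∂μ :=
        (integral_condExp (hFle t)).symm
      have h2 : ∫ ω, (μ[Y * b (t+1) | F t]) ω ∂μ
          = ∫ ω, (Y * μ[b (t+1) | F t]) ω ∂μ := integral_congr_ae hcond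
      have h3 : ∫ ω, Y ω * d t ∂μ ≤ ∫ ω, (Y * μ[b (t+1) | F t]) ω ∂μ := by
        apply integral_mono_ae (hYint.mul_const (d t)) hYceint
        filter_upwards [hKb t] with ω hω
        have := mul_le_mul_of_nonneg_left hω (hY0 ω)
        simpa [Pi.mul_apply] using this
      have h4 : ∫ ω, Y ω * d t ∂μ = d t * ∫ ω, Y ω ∂μ := by
        rw [integral_mul_const]; ring
      have h5 : ∫ ω, (Y * b (t+1)) ω ∂μ = ∫ ω, Y ω * b (t+1) ω ∂μ := by
        simp only [Pi.mul_apply]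
      linarith [h1, h2, h3, h4, h5]
    have hintLHS : Integrable
        (fun ω => Real.exp (-∑ r ∈ Finset.Ico s (t+1), b (r+1) ω)) μ := by
      refine hIbd _ 1 ?_ fun ω => ?_
      · apply Measurable.comp Real.measurable_exp (Measurable.neg ?_)
        apply Finset.measurable_sum
        intro r hr
        exact (hbmeas (r+1)).mono (hFle (r+1)) le_rfl
      · rw [Real.norm_eq_abs, abs_of_nonneg (Real.exp_pos _).le,
          show (1:ℝ) = Real.exp 0 from (Real.exp_zero).symm]
        apply Real.exp_le_exp.2
        have : 0 ≤ ∑ r ∈ Finset.Ico s (t+1), b (r+1) ω :=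
          Finset.sum_nonneg fun r _ => hb0 _ ω
        simpa using this
    have hint2 : Integrable (fun ω => Y ω * (1 - κ * b (t+1) ω)) μ := by
      refine hIbd _ 1 ((hYm.mul ((measurable_const.sub
        (hbm.const_mul κ))))) fun ω => ?_
      have hb' : 0 ≤ 1 - κ * b (t+1) ω := by nlinarith [hb0 (t+1) ω, hb1 (t+1) ω]
      have hb'' : 1 - κ * b (t+1) ω ≤ 1 := by nlinarith [hb0 (t+1) ω]
      rw [Real.norm_eq_abs, abs_of_nonneg (mul_nonneg (hY0 ω) hb')]
      nlinarith [hY0 ω, hY1 ω]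
    have hpt : ∀ ω, Real.exp (-∑ r ∈ Finset.Ico s (t+1), b (r+1) ω)
        ≤ Y ω * (1 - κ * b (t+1) ω) := by
      intro ω
      rw [Finset.sum_Ico_succ_top hst, neg_add, Real.exp_add]
      apply mul_le_mul_of_nonneg_left _ (hY0 ω)
      rw [hκdef]
      exact exp_neg_le_one_sub (hb0 _ ω) (hb1 _ ω)
    have hd1κ : 0 ≤ 1 - κ * d t := by nlinarith [hd0 t, hd1 t]
    calc ∫ ω, Real.exp (-∑ r ∈ Finset.Ico s (t+1), b (r+1) ω) ∂μ
        ≤ ∫ ω, Y ω * (1 - κ * b (t+1) ω) ∂μ := integral_mono hintLHS hint2 hpt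
      _ = ∫ ω, Y ω ∂μ - κ * ∫ ω, Y ω * b (t+1) ω ∂μ := by
          have heq : (fun ω => Y ω * (1 - κ * b (t+1) ω))
              = fun ω => Y ω - κ * (Y ω * b (t+1) ω) := by
            funext ω; ring
          rw [heq, integral_sub hYint ?_, integral_const_mul]
          · exact Integrable.const_mul (by exact hYbint) κ
      _ ≤ ∫ ω, Y ω ∂μ - κ * (d t * ∫ ω, Y ω ∂μ) := by
          have := mul_le_mul_of_nonneg_left hkey hκ0.le
          linarith
      _ = (1 - κ * d t) * ∫ ω, Y ω ∂μ := by ring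
      _ ≤ (1 - κ * d t) * ∏ r ∈ Finset.Ico s t, (1 - κ * d r) :=
          mul_le_mul_of_nonneg_left ih hd1κ
      _ = ∏ r ∈ Finset.Ico s (t+1), (1 - κ * d r) := by
          rw [Finset.prod_Ico_succ_top hst]; ring

end FlockAux

set_option maxHeartbeats 2000000 in
/-- Main theorem, case `α < 1`: an HL-flock with random interactions satisfying
Condition (K) with `p ∈ (0,1]` and `0 < α < 1` almost surely flocks:
`‖v[t]‖∞ → 0` and `x[t]` converges to a (random) limit in `ℝ^{3k}` as `t → ∞`. -/
theorem flocking_alpha_lt_one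
    (k : ℕ) (hk : 2 ≤ k)
    (Ω : Type*) [m0 : MeasurableSpace Ω]
    (μ : Measure Ω) [IsProbabilityMeasure μ]
    (F : ℕ → MeasurableSpace Ω)
    (hFle : ∀ t, F t ≤ m0) (hFmono : Monotone F)
    (x v : ℕ → Ω → Fin k → EuclideanSpace ℝ (Fin 3))
    (L : Fin k → Finset (Fin k))
    (a : ℕ → Ω → Fin k → Fin k → ℝ)
    (h : ℝ) (hh0 : 0 < h) (hh1 : h ≤ 1 / ((k : ℝ) - 1))
    (hLlt : ∀ i : Fin k, ∀ j ∈ L i, j < i)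
    (hLne : ∀ i : Fin k, 0 < i.val → (L i).Nonempty)
    (ha0 : ∀ t ω, ∀ i : Fin k, ∀ j ∈ L i, 0 ≤ a t ω i j)
    (ha1 : ∀ t ω, ∀ i : Fin k, ∀ j ∈ L i, a t ω i j ≤ 1)
    (hxmeas : ∀ t, Measurable[F t] (x t))
    (hvmeas : ∀ t, Measurable[F t] (v t))
    (hameas : ∀ t, ∀ i : Fin k, ∀ j ∈ L i, Measurable[F t] (fun ω => a t ω i j))
    (hxdyn : ∀ t ω i, x (t + 1) ω i = x t ω i + h • v t ω i)
    (hvdyn : ∀ t ω i, v (t + 1) ω i =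
      v t ω i + h • ∑ j ∈ L i, a (t + 1) ω i j • (v t ω j - v t ω i))
    (X0 V0 : Fin k → EuclideanSpace ℝ (Fin 3))
    (hX0 : ∀ ω, x 0 ω = X0) (hV0 : ∀ ω, v 0 ω = V0)
    (hX0z : X0 ⟨0, by omega⟩ = 0) (hV0z : V0 ⟨0, by omega⟩ = 0)
    (p : ℝ) (hp0 : 0 < p) (hp1 : p ≤ 1)
    (α : ℝ) (hα0 : 0 < α) (hα1 : α < 1)
    (hK : ∀ t : ℕ, ∀ i : Fin k, ∀ j ∈ L i,
      ∀ᵐ ω ∂μ, p / (1 + ‖x t ω i - x t ω j‖) ^ α ≤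
        (μ[fun ω' => a (t + 1) ω' i j | F t]) ω) :
    ∀ᵐ ω ∂μ,
      Tendsto (fun t : ℕ => ‖v t ω‖) atTop (nhds 0) ∧
      ∃ xhat : Fin k → EuclideanSpace ℝ (Fin 3),
        Tendsto (fun t : ℕ => x t ω) atTop (nhds xhat) := by
  classical
  have h1α : 0 < 1 - α := by linarith
  -- κ
  set κ : ℝ := 1 - Real.exp (-1) with hκdef
  have hκ0 : 0 < κ := by
    have : Real.exp (-1) < 1 := Real.exp_lt_one_iff.2 (by norm_num)
    rw [hκdef]; linarith
  have hκ1 : κ < 1 := by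
    have := Real.exp_pos (-1)
    rw [hκdef]; linarith
  -- step-size bound
  have hk1 : (1:ℝ) ≤ (k:ℝ) - 1 := by
    have : (2:ℝ) ≤ (k:ℝ) := by exact_mod_cast hk
    linarith
  have hhk : h * ((k:ℝ) - 1) ≤ 1 := by
    rw [le_div_iff₀ (by linarith : (0:ℝ) < (k:ℝ) - 1)] at hh1
    linarith
  have hcard : ∀ i : Fin k, ((L i).card : ℝ) ≤ (k:ℝ) - 1 := by
    intro i
    have hsub : L i ⊆ Finset.univ.erase i := fun j hj =>
      Finset.mem_erase.2 ⟨Fin.ne_of_lt (hLlt i j hj), Finset.mem_univ j⟩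
    have hle := Finset.card_le_card hsub
    rw [Finset.card_erase_of_mem (Finset.mem_univ i), Finset.card_univ,
      Fintype.card_fin] at hle
    have : ((L i).card : ℝ) ≤ ((k - 1 : ℕ) : ℝ) := by exact_mod_cast hle
    rwa [Nat.cast_sub (by omega), Nat.cast_one] at this
  have hsumA : ∀ t ω (i : Fin k), h * ∑ j ∈ L i, a t ω i j ≤ 1 := by
    intro t ω i
    have hs : ∑ j ∈ L i, a t ω i j ≤ ((L i).card : ℝ) := by
      calc ∑ j ∈ L i, a t ω i j ≤ ∑ j ∈ L i, 1 :=
            Finset.sum_le_sum fun j hj => ha1 t ω i j hj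
        _ = ((L i).card : ℝ) := by simp
    calc h * ∑ j ∈ L i, a t ω i j ≤ h * ((k:ℝ) - 1) :=
          mul_le_mul_of_nonneg_left (le_trans hs (hcard i)) hh0.le
      _ ≤ 1 := hhk
  -- uniform velocity bound
  set M0 : ℝ := ‖V0‖ with hM0def
  have hM0nn : 0 ≤ M0 := norm_nonneg _
  have hM0 : ∀ ω t (i : Fin k), ‖v t ω i‖ ≤ M0 := by
    intro ω t
    induction t with
    | zero => intro i; rw [hV0]; exact norm_le_pi_norm V0 i
    | succ t iht =>
      intro i
      rw [hvdyn]
      set c : ℝ := h * ∑ j ∈ L i, a (t+1) ω i j with hcdef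
      have hc0 : 0 ≤ c := mul_nonneg hh0.le
        (Finset.sum_nonneg fun j hj => ha0 (t+1) ω i j hj)
      have hc1 : c ≤ 1 := hsumA (t+1) ω i
      have hsplit : v t ω i + h • ∑ j ∈ L i, a (t+1) ω i j • (v t ω j - v t ω i)
          = (1 - c) • v t ω i + h • ∑ j ∈ L i, a (t+1) ω i j • v t ω j := by
        have heq : ∑ j ∈ L i, a (t+1) ω i j • (v t ω j - v t ω i)
            = (∑ j ∈ L i, a (t+1) ω i j • v t ω j)
              - (∑ j ∈ L i, a (t+1) ω i j) • v t ω i := by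
          rw [Finset.sum_smul, ← Finset.sum_sub_distrib]
          exact Finset.sum_congr rfl fun j _ => smul_sub _ _ _
        rw [heq, smul_sub, sub_smul, one_smul, smul_smul, hcdef]
        abel
      rw [hsplit]
      refine le_trans (norm_add_le _ _) ?_
      have h2 : ‖(1 - c) • v t ω i‖ ≤ (1 - c) * M0 := by
        rw [norm_smul, Real.norm_eq_abs, abs_of_nonneg (by linarith)]
        exact mul_le_mul_of_nonneg_left (iht i) (by linarith)
      have h3 : ‖h • ∑ j ∈ L i, a (t+1) ω i j • v t ω j‖ ≤ c * M0 := by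
        rw [norm_smul, Real.norm_eq_abs, abs_of_nonneg hh0.le]
        have h4 : ‖∑ j ∈ L i, a (t+1) ω i j • v t ω j‖
            ≤ ∑ j ∈ L i, a (t+1) ω i j * M0 := by
          refine le_trans (norm_sum_le _ _) (Finset.sum_le_sum fun j hj => ?_)
          rw [norm_smul, Real.norm_eq_abs, abs_of_nonneg (ha0 (t+1) ω i j hj)]
          exact mul_le_mul_of_nonneg_left (iht j) (ha0 (t+1) ω i j hj)
        rw [← Finset.sum_mul] at h4
        calc h * ‖∑ j ∈ L i, a (t+1) ω i j • v t ω j‖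
            ≤ h * ((∑ j ∈ L i, a (t+1) ω i j) * M0) :=
              mul_le_mul_of_nonneg_left h4 hh0.le
          _ = c * M0 := by rw [hcdef]; ring
      linarith
  -- position bound
  have hX : ∀ ω t (i : Fin k), ‖x t ω i‖ ≤ ‖X0‖ + h * M0 * t := by
    intro ω t
    induction t with
    | zero => intro i; rw [hX0]; simpa using norm_le_pi_norm X0 i
    | succ t iht =>
      intro i
      rw [hxdyn]
      calc ‖x t ω i + h • v t ω i‖ ≤ ‖x t ω i‖ + ‖h • v t ω i‖ := norm_add_le _ _
        _ ≤ (‖X0‖ + h * M0 * t) + h * M0 := by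
            have h5 : ‖h • v t ω i‖ ≤ h * M0 := by
              rw [norm_smul, Real.norm_eq_abs, abs_of_nonneg hh0.le]
              exact mul_le_mul_of_nonneg_left (hM0 ω t i) hh0.le
            linarith [iht i]
        _ = ‖X0‖ + h * M0 * ((t:ℝ) + 1) := by ring
        _ = ‖X0‖ + h * M0 * ((t:ℕ) + 1 : ℕ) := by push_cast; ring
  set Q : ℝ := 1 + 2*‖X0‖ + 2*h*M0 with hQdef
  have hQ1 : 1 ≤ Q := by
    have := norm_nonneg X0
    have := mul_nonneg hh0.le hM0nn
    rw [hQdef]; linarith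
  have hdist : ∀ ω t (i j : Fin k), 1 + ‖x t ω i - x t ω j‖ ≤ Q * ((t:ℝ)+1) := by
    intro ω t i j
    have h1 : ‖x t ω i - x t ω j‖ ≤ ‖x t ω i‖ + ‖x t ω j‖ := norm_sub_le _ _
    have h2 := hX ω t i
    have h3 := hX ω t j
    have ht0 : (0:ℝ) ≤ (t:ℝ) := Nat.cast_nonneg t
    have hX0nn := norm_nonneg X0
    have hhM := mul_nonneg hh0.le hM0nn
    rw [hQdef]
    nlinarith
  set d : ℕ → ℝ := fun r => p / (Q * ((r:ℝ)+1)) ^ α with hddef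
  have hQr1 : ∀ r : ℕ, 1 ≤ Q * ((r:ℝ)+1) := by
    intro r
    have ht0 : (0:ℝ) ≤ (r:ℝ) := Nat.cast_nonneg r
    nlinarith
  have hd0 : ∀ r, 0 < d r := by
    intro r
    exact div_pos hp0 (Real.rpow_pos_of_pos (by nlinarith [hQr1 r]) _)
  have hd1 : ∀ r, d r ≤ 1 := by
    intro r
    have hge : 1 ≤ (Q * ((r:ℝ)+1)) ^ α := Real.one_le_rpow (hQr1 r) hα0.le
    rw [hddef]
    rw [div_le_one (by linarith)]
    linarith
  have hdK : ∀ t (i j : Fin k) (ω : Ω),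
      d t ≤ p / (1 + ‖x t ω i - x t ω j‖) ^ α := by
    intro t i j ω
    have h1 : (1 + ‖x t ω i - x t ω j‖) ^ α ≤ (Q * ((t:ℝ)+1)) ^ α :=
      Real.rpow_le_rpow (by positivity) (hdist ω t i j) hα0.le
    have h2 : 0 < (1 + ‖x t ω i - x t ω j‖) ^ α :=
      Real.rpow_pos_of_pos (by positivity) _
    rw [hddef]
    exact div_le_div_of_nonneg_left hp0.le h2 h1
  -- conditional-expectation bound per pair
  have hE1 : ∀ (i j : Fin k), j ∈ L i → ∀ s t : ℕ, s ≤ t →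
      ∫ ω, Real.exp (-∑ r ∈ Finset.Ico s t, a (r+1) ω i j) ∂μ ≤
        ∏ r ∈ Finset.Ico s t, (1 - κ * d r) := by
    intro i j hj s t hst
    refine FlockAux.exp_int_bound μ F hFle hFmono (fun r ω => a r ω i j)
      (fun r ω => ha0 r ω i j hj) (fun r ω => ha1 r ω i j hj)
      (fun r => hameas r i j hj) d (fun r => (hd0 r).le) hd1 ?_ s t hst
    intro t'
    filter_upwards [hK t' i j hj] with ω hω
    exact le_trans (hdK t' i j ω) hω
  have hPPpos : ∀ s t : ℕ, 0 < ∏ r ∈ Finset.Ico s t, (1 - κ * d r) := by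
    intro s t
    apply Finset.prod_pos
    intro r _
    nlinarith [hd0 r, hd1 r]
  -- Markov bound for the bad events
  have hMarkov : ∀ (i j : Fin k), j ∈ L i → ∀ s t : ℕ, s ≤ t →
      μ {ω | (∏ r ∈ Finset.Ico s t, (1 - κ * d r)) * ((t:ℝ)+1)^4
          ≤ Real.exp (-∑ r ∈ Finset.Ico s t, a (r+1) ω i j)}
        ≤ ENNReal.ofReal (1/((t:ℝ)+1)^4) := by
    intro i j hj s t hst
    have hYm : Measurable (fun ω => Real.exp (-∑ r ∈ Finset.Ico s t, a (r+1) ω i j)) := by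
      apply Measurable.comp Real.measurable_exp (Measurable.neg ?_)
      exact Finset.measurable_sum _ fun r _ =>
        ((hameas (r+1) i j hj).mono (hFle (r+1)) le_rfl)
    have hYint : Integrable (fun ω => Real.exp (-∑ r ∈ Finset.Ico s t, a (r+1) ω i j)) μ := by
      refine ⟨hYm.aestronglyMeasurable, HasFiniteIntegral.of_bounded (C := 1)
        (ae_of_all μ fun ω => ?_)⟩
      rw [Real.norm_eq_abs, abs_of_nonneg (Real.exp_pos _).le,
        show (1:ℝ) = Real.exp 0 from (Real.exp_zero).symm]
      apply Real.exp_le_exp.2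
      have : 0 ≤ ∑ r ∈ Finset.Ico s t, a (r+1) ω i j :=
        Finset.sum_nonneg fun r _ => ha0 _ ω i j hj
      simpa using this
    have ht4 : (0:ℝ) < ((t:ℝ)+1)^4 := by positivity
    have hεpos : 0 < (∏ r ∈ Finset.Ico s t, (1 - κ * d r)) * ((t:ℝ)+1)^4 :=
      mul_pos (hPPpos s t) ht4
    have hmark := mul_meas_ge_le_integral_of_nonneg
      (ae_of_all μ fun ω => (Real.exp_pos _).le) hYint
      ((∏ r ∈ Finset.Ico s t, (1 - κ * d r)) * ((t:ℝ)+1)^4)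
    have h6 := hE1 i j hj s t hst
    have h7 : (μ {ω | (∏ r ∈ Finset.Ico s t, (1 - κ * d r)) * ((t:ℝ)+1)^4
        ≤ Real.exp (-∑ r ∈ Finset.Ico s t, a (r+1) ω i j)}).toReal
          ≤ 1/((t:ℝ)+1)^4 := by
      have h8 := le_trans hmark h6
      have h10 : (μ {ω | (∏ r ∈ Finset.Ico s t, (1 - κ * d r)) * ((t:ℝ)+1)^4
          ≤ Real.exp (-∑ r ∈ Finset.Ico s t, a (r+1) ω i j)}).toReal
          ≤ (∏ r ∈ Finset.Ico s t, (1 - κ * d r))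
            / ((∏ r ∈ Finset.Ico s t, (1 - κ * d r)) * ((t:ℝ)+1)^4) := by
        rw [le_div_iff₀ hεpos]
        rw [measureReal_def] at h8
        linarith [h8]
      have h11 : (∏ r ∈ Finset.Ico s t, (1 - κ * d r))
          / ((∏ r ∈ Finset.Ico s t, (1 - κ * d r)) * ((t:ℝ)+1)^4)
          = 1/((t:ℝ)+1)^4 := by
        rw [div_mul_eq_div_div, div_self (hPPpos s t).ne']
      rw [h11] at h10
      exact h10
    calc μ {ω | (∏ r ∈ Finset.Ico s t, (1 - κ * d r)) * ((t:ℝ)+1)^4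
          ≤ Real.exp (-∑ r ∈ Finset.Ico s t, a (r+1) ω i j)}
        = ENNReal.ofReal ((μ {ω | (∏ r ∈ Finset.Ico s t, (1 - κ * d r)) * ((t:ℝ)+1)^4
          ≤ Real.exp (-∑ r ∈ Finset.Ico s t, a (r+1) ω i j)}).toReal) :=
          (ENNReal.ofReal_toReal (measure_ne_top μ _)).symm
      _ ≤ ENNReal.ofReal (1/((t:ℝ)+1)^4) := ENNReal.ofReal_le_ofReal h7
  -- the bad events, aggregated per time
  set P2 : Finset (Fin k × Fin k) := Finset.univ.filter (fun z => z.2 ∈ L z.1) with hP2def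
  set Ebad : ℕ → Set Ω := fun t => ⋃ z ∈ (P2 ×ˢ Finset.range (t+1)),
      {ω | (∏ r ∈ Finset.Ico z.2 t, (1 - κ * d r)) * ((t:ℝ)+1)^4
          ≤ Real.exp (-∑ r ∈ Finset.Ico z.2 t, a (r+1) ω z.1.1 z.1.2)} with hEdef
  have hEbound : ∀ t : ℕ, μ (Ebad t) ≤ ENNReal.ofReal ((k:ℝ)^2 * (1/((t:ℝ)+1)^2)) := by
    intro t
    refine le_trans (measure_biUnion_finset_le _ _) ?_
    have hterm : ∀ z ∈ P2 ×ˢ Finset.range (t+1),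
        μ {ω | (∏ r ∈ Finset.Ico z.2 t, (1 - κ * d r)) * ((t:ℝ)+1)^4
          ≤ Real.exp (-∑ r ∈ Finset.Ico z.2 t, a (r+1) ω z.1.1 z.1.2)}
        ≤ ENNReal.ofReal (1/((t:ℝ)+1)^4) := by
      intro z hz
      rw [Finset.mem_product] at hz
      obtain ⟨hz1, hz2⟩ := hz
      rw [hP2def, Finset.mem_filter] at hz1
      exact hMarkov z.1.1 z.1.2 hz1.2 z.2 t (Nat.lt_succ_iff.1 (Finset.mem_range.1 hz2))
    refine le_trans (Finset.sum_le_sum hterm) ?_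
    rw [Finset.sum_const]
    have hcard2 : (P2 ×ˢ Finset.range (t+1)).card ≤ k^2 * (t+1) := by
      rw [Finset.card_product, Finset.card_range]
      have h1 : P2.card ≤ k^2 := by
        calc P2.card ≤ (Finset.univ : Finset (Fin k × Fin k)).card :=
              Finset.card_filter_le _ _
          _ = k^2 := by simp [Finset.card_univ]; ring
      exact Nat.mul_le_mul_right _ h1
    calc (P2 ×ˢ Finset.range (t+1)).card • ENNReal.ofReal (1/((t:ℝ)+1)^4)
        ≤ (k^2 * (t+1)) • ENNReal.ofReal (1/((t:ℝ)+1)^4) := by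
          exact nsmul_le_nsmul_left zero_le hcard2
      _ = ENNReal.ofReal ((k^2 * (t+1) : ℕ) * (1/((t:ℝ)+1)^4)) := by
          rw [nsmul_eq_mul, ← ENNReal.ofReal_natCast (k^2*(t+1)),
            ← ENNReal.ofReal_mul (by positivity)]
      _ ≤ ENNReal.ofReal ((k:ℝ)^2 * (1/((t:ℝ)+1)^2)) := by
          apply ENNReal.ofReal_le_ofReal
          have hy1 : (1:ℝ) ≤ (t:ℝ)+1 := by linarith [(Nat.cast_nonneg t : (0:ℝ) ≤ (t:ℝ))]
          have hy0 : (0:ℝ) ≤ (t:ℝ)+1 := by positivity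
          have hexp : ((t:ℝ)+1)^3 ≤ ((t:ℝ)+1)^4 := by
            nlinarith [mul_nonneg (mul_nonneg (mul_nonneg hy0 hy0) hy0)
              (by linarith : (0:ℝ) ≤ (t:ℝ)+1-1)]
          have h2 : ((t:ℝ)+1) * (1/((t:ℝ)+1)^4) ≤ 1/((t:ℝ)+1)^2 := by
            rw [mul_one_div, div_le_div_iff₀ (by positivity) (by positivity)]
            nlinarith
          have h3 : ((k^2*(t+1):ℕ):ℝ) = (k:ℝ)^2 * ((t:ℝ)+1) := by push_cast; ring
          rw [h3, mul_assoc]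
          apply mul_le_mul_of_nonneg_left h2 (by positivity)
  have hsumne : (∑' t, μ (Ebad t)) ≠ ⊤ := by
    have hs := Real.summable_one_div_nat_pow.2 (show 1 < 2 by norm_num)
    have hs2 : Summable (fun n : ℕ => 1/((n:ℝ)+1)^2) := by
      have h2 := (_root_.summable_nat_add_iff 1).2 hs
      apply h2.congr
      intro n; push_cast; ring
    have hgsum : Summable (fun t : ℕ => (k:ℝ)^2 * (1/((t:ℝ)+1)^2)) := hs2.mul_left _
    have hle := ENNReal.tsum_le_tsum hEbound
    rw [← ENNReal.ofReal_tsum_of_nonneg (fun t => by positivity) hgsum] at hle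
    exact ne_top_of_le_ne_top ENNReal.ofReal_ne_top hle
  have hBC := MeasureTheory.ae_eventually_notMem hsumne
  -- pass to a single good ω
  filter_upwards [hBC] with ω hω
  obtain ⟨T, hT⟩ := eventually_atTop.1 hω
  -- window lower bound for the coefficient sums
  set γ0 : ℝ := κ * (p / Q ^ α) / (1 - α) with hγ0def
  have hQ0 : (0:ℝ) < Q := by linarith
  have hQα : 0 < Q ^ α := Real.rpow_pos_of_pos hQ0 _
  have hγ0pos : 0 < γ0 := by rw [hγ0def]; positivity
  have hdeq : ∀ r : ℕ, d r = (p / Q^α) * ((r:ℝ)+1)^(-α) := by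
    intro r
    have hr0 : (0:ℝ) < (r:ℝ)+1 := by positivity
    rw [hddef]
    simp only []
    rw [Real.mul_rpow hQ0.le hr0.le, Real.rpow_neg hr0.le]
    field_simp
  have hsumd : ∀ s t : ℕ, s ≤ t →
      γ0 * (((t:ℝ)+1)^(1-α) - ((s:ℝ)+1)^(1-α)) ≤ κ * ∑ r ∈ Finset.Ico s t, d r := by
    intro s t hst
    have h1 := FlockAux.sum_rpow_inv_ge hα0 hα1 s t hst
    have h2 : ∑ r ∈ Finset.Ico s t, d r
        = (p/Q^α) * ∑ r ∈ Finset.Ico s t, ((r:ℝ)+1)^(-α) := by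
      rw [Finset.mul_sum]; exact Finset.sum_congr rfl fun r _ => hdeq r
    have hγ0nn : 0 ≤ γ0 := hγ0pos.le
    calc γ0 * (((t:ℝ)+1)^(1-α) - ((s:ℝ)+1)^(1-α))
        ≤ γ0 * ((1-α) * ∑ r ∈ Finset.Ico s t, ((r:ℝ)+1)^(-α)) :=
          mul_le_mul_of_nonneg_left h1 hγ0nn
      _ = κ * ((p/Q^α) * ∑ r ∈ Finset.Ico s t, ((r:ℝ)+1)^(-α)) := by
          rw [hγ0def]; field_simp
      _ = κ * ∑ r ∈ Finset.Ico s t, d r := by rw [h2]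
  have hWB : ∀ (i jj : Fin k), jj ∈ L i → ∀ s t : ℕ, s ≤ t →
      γ0 * (((t:ℝ)+1)^(1-α) - ((s:ℝ)+1)^(1-α)) ≤
        (∑ r ∈ Finset.Ico s t, a (r+1) ω i jj) + 4 * Real.log ((t:ℝ)+1) + κ * T := by
    intro i jj hj s t hst
    have hy1 : (1:ℝ) ≤ (t:ℝ)+1 := by linarith [(Nat.cast_nonneg t : (0:ℝ) ≤ (t:ℝ))]
    have hlognn : 0 ≤ Real.log ((t:ℝ)+1) := Real.log_nonneg hy1
    have hSann : 0 ≤ ∑ r ∈ Finset.Ico s t, a (r+1) ω i jj :=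
      Finset.sum_nonneg fun r _ => ha0 _ ω i jj hj
    have hκT : 0 ≤ κ * T := mul_nonneg hκ0.le (Nat.cast_nonneg T)
    have h9 := hsumd s t hst
    by_cases htT : T ≤ t
    · have hnot : ω ∉ Ebad t := hT t htT
      have hYlt : Real.exp (-∑ r ∈ Finset.Ico s t, a (r+1) ω i jj)
          < (∏ r ∈ Finset.Ico s t, (1 - κ * d r)) * ((t:ℝ)+1)^4 := by
        by_contra hcon
        push_neg at hcon
        apply hnot
        rw [hEdef]
        exact Set.mem_iUnion₂.2 ⟨((i,jj), s),
          Finset.mem_product.2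
            ⟨Finset.mem_filter.2 ⟨Finset.mem_univ _, hj⟩,
              Finset.mem_range.2 (by omega)⟩, hcon⟩
      have hPPe : (∏ r ∈ Finset.Ico s t, (1 - κ * d r))
          ≤ Real.exp (-(κ * ∑ r ∈ Finset.Ico s t, d r)) := by
        have h10 := FlockAux.prod_one_sub_le_exp (Finset.Ico s t) (fun r => κ * d r)
          (fun r _ => by
            show κ * d r ≤ 1
            nlinarith [hd1 r, hd0 r, hκ0, hκ1])
        rw [← Finset.mul_sum] at h10
        exact h10
      have hT4 : ((t:ℝ)+1)^4 = Real.exp (4 * Real.log ((t:ℝ)+1)) := by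
        rw [show (4:ℝ) * Real.log ((t:ℝ)+1) = Real.log (((t:ℝ)+1)^4) by
            rw [Real.log_pow]; norm_num,
          Real.exp_log (by positivity)]
      have hcomb : Real.exp (-∑ r ∈ Finset.Ico s t, a (r+1) ω i jj)
          < Real.exp (-(κ * ∑ r ∈ Finset.Ico s t, d r) + 4 * Real.log ((t:ℝ)+1)) := by
        refine lt_of_lt_of_le hYlt ?_
        rw [Real.exp_add, hT4]
        exact mul_le_mul_of_nonneg_right hPPe (Real.exp_pos _).le
      have h11 := Real.exp_lt_exp.1 hcomb
      linarith
    · push_neg at htT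
      have h10 : κ * ∑ r ∈ Finset.Ico s t, d r ≤ κ * T := by
        have h11 : ∑ r ∈ Finset.Ico s t, d r ≤ ((t - s : ℕ) : ℝ) := by
          calc ∑ r ∈ Finset.Ico s t, d r ≤ ∑ r ∈ Finset.Ico s t, 1 :=
                Finset.sum_le_sum fun r _ => hd1 r
            _ = ((t - s : ℕ) : ℝ) := by rw [Finset.sum_const, Nat.card_Ico]; simp
        have h12 : ((t - s : ℕ):ℝ) ≤ (T:ℝ) := by
          exact_mod_cast (by omega : t - s ≤ T)
        exact mul_le_mul_of_nonneg_left (le_trans h11 h12) hκ0.le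
      linarith
  -- velocity decay via the deterministic lemma
  have hdec := FlockAux.det_decay (fun t => v t ω) L (fun t i j => a t ω i j) h hh0
    hLlt hLne (fun t i j hj => ha0 t ω i j hj)
    (fun t i => hvdyn t ω i) (fun t i => hsumA (t+1) ω i)
    (fun i hi => by
      show v 0 ω i = 0
      rw [hV0 ω]
      have hieq : i = ⟨0, by omega⟩ := by
        apply Fin.ext; simp [hi]
      rw [hieq]; exact hV0z)
    M0 (fun t i => hM0 ω t i) α γ0 hα0 hα1 hγ0pos (κ * T)
    (mul_nonneg hκ0.le (Nat.cast_nonneg T))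
    (fun i j hj s t hst => hWB i j hj s t hst)
  have hexists : ∀ i : Fin k, ∃ Bβ : ℝ × ℝ, 0 ≤ Bβ.1 ∧ 0 < Bβ.2 ∧
      ∀ t : ℕ, ‖v t ω i‖ ≤ Bβ.1 * Real.exp (-Bβ.2 * ((t:ℝ)+1)^(1-α)) := by
    intro i
    obtain ⟨B, β, h1, h2, h3⟩ := hdec i
    exact ⟨(B, β), h1, h2, h3⟩
  choose g hg1 hg2 hg3 using hexists
  have hneu : (Finset.univ : Finset (Fin k)).Nonempty :=
    ⟨⟨0, by omega⟩, Finset.mem_univ _⟩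
  set Bt : ℝ := ∑ i, (g i).1 with hBtdef
  set βt : ℝ := Finset.univ.inf' hneu (fun i => (g i).2) with hβtdef
  have hBtnn : 0 ≤ Bt := Finset.sum_nonneg fun i _ => hg1 i
  have hβtpos : 0 < βt := by
    rw [hβtdef, Finset.lt_inf'_iff]
    exact fun i _ => hg2 i
  have hφpos : ∀ t : ℕ, (0:ℝ) < ((t:ℝ)+1)^(1-α) :=
    fun t => Real.rpow_pos_of_pos (by positivity) _
  have hbound : ∀ t (i : Fin k), ‖v t ω i‖ ≤ Bt * Real.exp (-βt * ((t:ℝ)+1)^(1-α)) := by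
    intro t i
    refine le_trans (hg3 i t) ?_
    have hB := Finset.single_le_sum (fun i (_ : i ∈ Finset.univ) => hg1 i) (Finset.mem_univ i)
    have hβ : βt ≤ (g i).2 := Finset.inf'_le _ (Finset.mem_univ i)
    apply mul_le_mul hB _ (Real.exp_nonneg _) hBtnn
    apply Real.exp_le_exp.2
    have h1 := mul_le_mul_of_nonneg_right hβ (hφpos t).le
    linarith
  constructor
  · -- velocities tend to zero
    apply squeeze_zero (g := fun t : ℕ => Bt * Real.exp (-βt * ((t:ℝ)+1)^(1-α)))
      (fun t => norm_nonneg _) ?_ ?_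
    · intro t
      rw [pi_norm_le_iff_of_nonneg (mul_nonneg hBtnn (Real.exp_nonneg _))]
      exact fun i => hbound t i
    · have hφtop : Tendsto (fun t : ℕ => ((t:ℝ)+1)^(1-α)) atTop atTop := by
        apply (tendsto_rpow_atTop h1α).comp
        exact tendsto_atTop_add_const_right _ 1 tendsto_natCast_atTop_atTop
      have h1 : Tendsto (fun t : ℕ => βt * ((t:ℝ)+1)^(1-α)) atTop atTop :=
        hφtop.const_mul_atTop hβtpos
      have h2 : Tendsto (fun t : ℕ => -(βt * ((t:ℝ)+1)^(1-α))) atTop atBot :=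
        tendsto_neg_atTop_atBot.comp h1
      have h3 : Tendsto (fun t : ℕ => Real.exp (-(βt * ((t:ℝ)+1)^(1-α)))) atTop (nhds 0) :=
        Real.tendsto_exp_atBot.comp h2
      have h4 := h3.const_mul Bt
      rw [mul_zero] at h4
      refine h4.congr fun t => ?_
      rw [neg_mul]
  · -- positions converge
    obtain ⟨C3, hC3nn, hlog3⟩ := FlockAux.log_lin_le (M := 2) (δ := βt) (c := 1-α)
      (by norm_num) hβtpos h1α
    have hgsummable : Summable (fun t : ℕ => Bt * Real.exp (-βt * ((t:ℝ)+1)^(1-α))) := by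
      apply Summable.mul_left
      have hs := Real.summable_one_div_nat_pow.2 (show 1 < 2 by norm_num)
      have hs2 : Summable (fun n : ℕ => 1/((n:ℝ)+1)^2) := by
        have h2 := (_root_.summable_nat_add_iff 1).2 hs
        apply h2.congr
        intro n; push_cast; ring
      refine Summable.of_nonneg_of_le (fun t => Real.exp_nonneg _) (fun t => ?_)
        (hs2.mul_left (Real.exp C3))
      have hy1 : (1:ℝ) ≤ (t:ℝ)+1 := by linarith [(Nat.cast_nonneg t : (0:ℝ) ≤ (t:ℝ))]
      have hl := hlog3 ((t:ℝ)+1) hy1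
      have hT2 : ((t:ℝ)+1)^2 = Real.exp (2 * Real.log ((t:ℝ)+1)) := by
        rw [show (2:ℝ) * Real.log ((t:ℝ)+1) = Real.log (((t:ℝ)+1)^2) by
            rw [Real.log_pow]; norm_num,
          Real.exp_log (by positivity)]
      have h5 : Real.exp (-βt * ((t:ℝ)+1)^(1-α)) * ((t:ℝ)+1)^2 ≤ Real.exp C3 := by
        rw [hT2, ← Real.exp_add]
        apply Real.exp_le_exp.2
        linarith
      calc Real.exp (-βt * ((t:ℝ)+1)^(1-α))
          = Real.exp (-βt * ((t:ℝ)+1)^(1-α)) * ((t:ℝ)+1)^2 * (1/((t:ℝ)+1)^2) := by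
            field_simp
        _ ≤ Real.exp C3 * (1/((t:ℝ)+1)^2) :=
            mul_le_mul_of_nonneg_right h5 (by positivity)
    have hvsummable : ∀ i : Fin k, Summable (fun t : ℕ => v t ω i) := fun i =>
      Summable.of_norm_bounded hgsummable (fun t => hbound t i)
    have hxpart : ∀ t (i : Fin k),
        x t ω i = X0 i + h • ∑ s ∈ Finset.range t, v s ω i := by
      intro t
      induction t with
      | zero => intro i; simp [hX0]
      | succ t iht =>
        intro i
        rw [hxdyn, iht i, Finset.sum_range_succ, smul_add]
        abel
    refine ⟨fun i => X0 i + h • (∑' s, v s ω i), ?_⟩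
    rw [tendsto_pi_nhds]
    intro i
    have h6 : Tendsto (fun t => ∑ s ∈ Finset.range t, v s ω i) atTop
        (nhds (∑' s, v s ω i)) := (hvsummable i).hasSum.tendsto_sum_nat
    have h7 : Tendsto (fun t => X0 i + h • ∑ s ∈ Finset.range t, v s ω i) atTop
        (nhds (X0 i + h • (∑' s, v s ω i))) := (h6.const_smul h).const_add (X0 i)
    exact h7.congr fun t => (hxpart t i).symm
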